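/- There exists η > 0 such that for every A ∈ ℂ^{n₁+1}, every B ∈ ℂ^{n₃+1} and every z with |z| < η for which (P_A(z), Q_B(z)) ≠ (0,0), one has ω₊(∂F/∂x(z,A,B), ∂F/∂y(z,A,B)) > 0; i.e. the deformed disks F(·,A,B) are symplectic with respect to ω₊ at every immersion point near 0, with η independent of (A,B). -/

import Mathlib

/-!
The real derivative of `w ↦ g w + conj (h w)` with `g' = a`, `h' = b` is `v ↦ a v + conj (b v)`,
so `ω₊(∂F/∂x, ∂F/∂y) = |h₁|² − |h₂|² + |h₃|² − |h₄|²`. Grouping the terms by `P_A` and `Q_B`, this is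
`|P_A|² (|t₁|² − |z^(n₄-n₁) t₄|²) + |Q_B|² (|t₃|² − |z^(n₂-n₃) t₂|²)`, and both brackets are positive
on a disk around `0` that depends only on the `tᵢ`, because `t₁(0), t₃(0) ≠ 0` while the exponents
are positive.
-/

open Complex ComplexConjugate Metric

/-- The monic-plus-perturbation polynomial `P_A(z) = z^n + Σ_{i=0}^n aᵢ zⁱ`. -/
noncomputable def Ppoly (n : ℕ) (A : Fin (n + 1) → ℂ) (z : ℂ) : ℂ :=
  z ^ n + ∑ i : Fin (n + 1), A i * z ^ (i : ℕ)

/-- The symplectic form `ω₊(u,v) = (u₁v₂ − u₂v₁) + (u₃v₄ − u₄v₃)` on `ℝ⁴ ≅ ℂ²`. -/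
noncomputable def omegaPlus (u v : ℂ × ℂ) : ℝ :=
  (u.1.re * v.1.im - u.1.im * v.1.re) + (u.2.re * v.2.im - u.2.im * v.2.re)

open Filter Topology

noncomputable def addConjCLM (a b : ℂ) : ℂ →L[ℝ] ℂ :=
  ((1 : ℂ →L[ℂ] ℂ).smulRight a).restrictScalars ℝ +
    conjCLE.toContinuousLinearMap.comp (((1 : ℂ →L[ℂ] ℂ).smulRight b).restrictScalars ℝ)

@[simp]
lemma addConjCLM_apply (a b v : ℂ) : addConjCLM a b v = a * v + conj (b * v) := by
  simp [addConjCLM, mul_comm]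

lemma HasDerivAt.hasFDerivAt_add_conj {g h : ℂ → ℂ} {a b z : ℂ}
    (hg : HasDerivAt g a z) (hh : HasDerivAt h b z) :
    HasFDerivAt (fun w => g w + conj (h w)) (addConjCLM a b) z :=
  (hg.hasFDerivAt.restrictScalars ℝ).add
    (conjCLE.toContinuousLinearMap.hasFDerivAt.comp z (hh.hasFDerivAt.restrictScalars ℝ))

lemma omegaPlus_prod_addConjCLM (a b c d : ℂ) :
    omegaPlus ((addConjCLM a b).prod (addConjCLM c d) 1) ((addConjCLM a b).prod (addConjCLM c d) I)
      = normSq a - normSq b + (normSq c - normSq d) := by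
  simp only [omegaPlus, ContinuousLinearMap.prod_apply, addConjCLM_apply, normSq_apply, add_re,
    add_im, mul_re, mul_im, conj_re, conj_im, I_re, I_im, one_re, one_im]
  ring

lemma normSq_mul_sub_normSq_mul_pos {P Q u v x y : ℂ} (hvu : ‖v‖ < ‖u‖) (hyx : ‖y‖ < ‖x‖)
    (hPQ : ¬(P = 0 ∧ Q = 0)) :
    0 < normSq (P * u) - normSq (P * v) + (normSq (Q * x) - normSq (Q * y)) := by
  have hgroup : normSq (P * u) - normSq (P * v) + (normSq (Q * x) - normSq (Q * y))
      = normSq P * (‖u‖ ^ 2 - ‖v‖ ^ 2) + normSq Q * (‖x‖ ^ 2 - ‖y‖ ^ 2) := by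
    simp only [map_mul, normSq_eq_norm_sq]
    ring
  have huv : 0 < ‖u‖ ^ 2 - ‖v‖ ^ 2 := sub_pos.mpr (pow_lt_pow_left₀ hvu (norm_nonneg v) two_ne_zero)
  have hxy : 0 < ‖x‖ ^ 2 - ‖y‖ ^ 2 := sub_pos.mpr (pow_lt_pow_left₀ hyx (norm_nonneg y) two_ne_zero)
  rw [hgroup]
  rcases not_and_or.mp hPQ with hP | hQ
  · exact add_pos_of_pos_of_nonneg (mul_pos (normSq_pos.mpr hP) huv)
      (mul_nonneg (normSq_nonneg Q) hxy.le)
  · exact add_pos_of_nonneg_of_pos (mul_nonneg (normSq_nonneg P) huv.le)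
      (mul_pos (normSq_pos.mpr hQ) hxy)

lemma eventually_norm_pow_mul_lt_norm {𝕜 : Type*} [NormedField 𝕜] {s t : 𝕜 → 𝕜} {k : ℕ} (hk : k ≠ 0)
    (hs : ContinuousAt s 0) (ht : ContinuousAt t 0) (ht0 : t 0 ≠ 0) :
    ∀ᶠ z in 𝓝 0, ‖z ^ k * s z‖ < ‖t z‖ := by
  have hsmall : Tendsto (fun z => ‖z ^ k * s z‖) (𝓝 0) (𝓝 0) := by
    simpa [ContinuousAt, zero_pow hk] using ((continuousAt_id.pow k).mul hs).norm
  exact hsmall.eventually_lt ht.norm (norm_pos_iff.mpr ht0)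

lemma DifferentiableOn.continuousAt_zero_of_ball {t : ℂ → ℂ}
    (ht : DifferentiableOn ℂ t (ball 0 1)) : ContinuousAt t 0 :=
  (ht.differentiableAt (ball_mem_nhds 0 one_pos)).continuousAt

theorem deformed_disks_are_symplectic_general
    (n₁ n₂ n₃ n₄ : ℕ)
    (h14 : n₁ < n₄) (h32 : n₃ < n₂)
    (t₁ t₂ t₃ t₄ : ℂ → ℂ)
    (ht₁ : DifferentiableOn ℂ t₁ (ball (0:ℂ) 1))
    (ht₂ : DifferentiableOn ℂ t₂ (ball (0:ℂ) 1))
    (ht₃ : DifferentiableOn ℂ t₃ (ball (0:ℂ) 1))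
    (ht₄ : DifferentiableOn ℂ t₄ (ball (0:ℂ) 1))
    (ht₁0 : t₁ 0 ≠ 0) (ht₃0 : t₃ 0 ≠ 0)
    (g₁ g₂ g₃ g₄ : (Fin (n₁ + 1) → ℂ) → (Fin (n₃ + 1) → ℂ) → ℂ → ℂ)
    (hg₁ : ∀ A B, ∀ z ∈ ball (0:ℂ) 1,
      HasDerivAt (g₁ A B) (Ppoly n₁ A z * t₁ z) z)
    (hg₂ : ∀ A B, ∀ z ∈ ball (0:ℂ) 1,
      HasDerivAt (g₂ A B) (z ^ (n₂ - n₃) * (Ppoly n₃ B z * t₂ z)) z)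
    (hg₃ : ∀ A B, ∀ z ∈ ball (0:ℂ) 1,
      HasDerivAt (g₃ A B) (Ppoly n₃ B z * t₃ z) z)
    (hg₄ : ∀ A B, ∀ z ∈ ball (0:ℂ) 1,
      HasDerivAt (g₄ A B) (z ^ (n₄ - n₁) * (Ppoly n₁ A z * t₄ z)) z)
    (FF : (Fin (n₁ + 1) → ℂ) → (Fin (n₃ + 1) → ℂ) → ℂ → ℂ × ℂ)
    (hFF : ∀ A B z, FF A B z =
      (g₁ A B z + conj (g₂ A B z), g₃ A B z + conj (g₄ A B z)))
    :
    ∃ η > (0:ℝ), ∀ (A : Fin (n₁ + 1) → ℂ) (B : Fin (n₃ + 1) → ℂ), ∀ z : ℂ, ‖z‖ < η →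
      ¬(Ppoly n₁ A z = 0 ∧ Ppoly n₃ B z = 0) →
      0 < omegaPlus (fderiv ℝ (FF A B) z 1) (fderiv ℝ (FF A B) z Complex.I) := by
  have h₄₁ := eventually_norm_pow_mul_lt_norm (Nat.sub_ne_zero_of_lt h14)
    ht₄.continuousAt_zero_of_ball ht₁.continuousAt_zero_of_ball ht₁0
  have h₂₃ := eventually_norm_pow_mul_lt_norm (Nat.sub_ne_zero_of_lt h32)
    ht₂.continuousAt_zero_of_ball ht₃.continuousAt_zero_of_ball ht₃0
  obtain ⟨η, hη, hnear⟩ := Metric.eventually_nhds_iff.mp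
    ((h₄₁.and h₂₃).and (ball_mem_nhds (0 : ℂ) one_pos))
  refine ⟨η, hη, fun A B z hz hPQ => ?_⟩
  obtain ⟨⟨hlt₄₁, hlt₂₃⟩, hz1⟩ := hnear (by rwa [dist_zero_right])
  have hF := (((hg₁ A B z hz1).hasFDerivAt_add_conj (hg₂ A B z hz1)).prodMk
    ((hg₃ A B z hz1).hasFDerivAt_add_conj (hg₄ A B z hz1))).congr_of_eventuallyEq
      (.of_forall (hFF A B))
  rw [hF.fderiv, omegaPlus_prod_addConjCLM, mul_left_comm (z ^ (n₄ - n₁)),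
    mul_left_comm (z ^ (n₂ - n₃))]
  linarith [normSq_mul_sub_normSq_mul_pos hlt₄₁ hlt₂₃ hPQ]

/-- There is `η > 0`, independent of `(A,B)`, such that the deformed
disks `F(·,A,B)` are symplectic w.r.t. `ω₊` at every point `z` with `|z| < η` where
`(P_A(z), Q_B(z)) ≠ (0,0)`. -/
theorem deformed_disks_are_symplectic
    (n₁ n₂ n₃ n₄ : ℕ)
    (h12 : n₁ < n₂) (h13 : n₁ < n₃) (h14 : n₁ < n₄) (h32 : n₃ < n₂)
    (hsum : n₁ + n₂ = n₃ + n₄)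
    (t₁ t₂ t₃ t₄ f₁ f₂ f₃ f₄ : ℂ → ℂ)
    (ht₁ : DifferentiableOn ℂ t₁ (ball (0:ℂ) 1))
    (ht₂ : DifferentiableOn ℂ t₂ (ball (0:ℂ) 1))
    (ht₃ : DifferentiableOn ℂ t₃ (ball (0:ℂ) 1))
    (ht₄ : DifferentiableOn ℂ t₄ (ball (0:ℂ) 1))
    (ht₁0 : t₁ 0 ≠ 0) (ht₂0 : t₂ 0 ≠ 0) (ht₃0 : t₃ 0 ≠ 0) (ht₄0 : t₄ 0 ≠ 0)
    (hf₁ : ∀ z ∈ ball (0:ℂ) 1, HasDerivAt f₁ (z ^ n₁ * t₁ z) z)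
    (hf₂ : ∀ z ∈ ball (0:ℂ) 1, HasDerivAt f₂ (z ^ n₂ * t₂ z) z)
    (hf₃ : ∀ z ∈ ball (0:ℂ) 1, HasDerivAt f₃ (z ^ n₃ * t₃ z) z)
    (hf₄ : ∀ z ∈ ball (0:ℂ) 1, HasDerivAt f₄ (z ^ n₄ * t₄ z) z)
    (hconf : ∀ z ∈ ball (0:ℂ) 1,
      (z ^ n₁ * t₁ z) * (z ^ n₂ * t₂ z) + (z ^ n₃ * t₃ z) * (z ^ n₄ * t₄ z) = 0)
    (g₁ g₂ g₃ g₄ : (Fin (n₁ + 1) → ℂ) → (Fin (n₃ + 1) → ℂ) → ℂ → ℂ)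
    (hg₁0 : ∀ A B, g₁ A B 0 = 0) (hg₂0 : ∀ A B, g₂ A B 0 = 0)
    (hg₃0 : ∀ A B, g₃ A B 0 = 0) (hg₄0 : ∀ A B, g₄ A B 0 = 0)
    (hg₁ : ∀ A B, ∀ z ∈ ball (0:ℂ) 1,
      HasDerivAt (g₁ A B) (Ppoly n₁ A z * t₁ z) z)
    (hg₂ : ∀ A B, ∀ z ∈ ball (0:ℂ) 1,
      HasDerivAt (g₂ A B) (z ^ (n₂ - n₃) * (Ppoly n₃ B z * t₂ z)) z)
    (hg₃ : ∀ A B, ∀ z ∈ ball (0:ℂ) 1,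
      HasDerivAt (g₃ A B) (Ppoly n₃ B z * t₃ z) z)
    (hg₄ : ∀ A B, ∀ z ∈ ball (0:ℂ) 1,
      HasDerivAt (g₄ A B) (z ^ (n₄ - n₁) * (Ppoly n₁ A z * t₄ z)) z)
    (FF : (Fin (n₁ + 1) → ℂ) → (Fin (n₃ + 1) → ℂ) → ℂ → ℂ × ℂ)
    (hFF : ∀ A B z, FF A B z =
      (g₁ A B z + conj (g₂ A B z), g₃ A B z + conj (g₄ A B z)))
    :
    ∃ η > (0:ℝ), ∀ (A : Fin (n₁ + 1) → ℂ) (B : Fin (n₃ + 1) → ℂ), ∀ z : ℂ, ‖z‖ < η →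
      ¬(Ppoly n₁ A z = 0 ∧ Ppoly n₃ B z = 0) →
      0 < omegaPlus (fderiv ℝ (FF A B) z 1) (fderiv ℝ (FF A B) z Complex.I) :=
  deformed_disks_are_symplectic_general n₁ n₂ n₃ n₄ h14 h32 t₁ t₂ t₃ t₄ ht₁ ht₂ ht₃ ht₄ ht₁0 ht₃0 g₁
    g₂ g₃ g₄ hg₁ hg₂ hg₃ hg₄ FF hFF
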